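/- arXiv:1909.03659 — 4 statements merged into one kernel-verified Lean document; each statement's English description precedes it below -/
import Mathlib

section
/- Fix d ≥ 2 and an index j with 1 ≤ j ≤ d. Define h_j : ℤ^d \ {0} → ℝ by h_j(n) = n_j/|n| − n_j/((2π)^(−2) + |n|²)^(1/2), and h_j(0) = 0. Then for every p > d/2 the function h_j belongs to ℓ_p(ℤ^d), i.e. Σ_{n ∈ ℤ^d} |h_j(n)|^p < ∞. -/
open Real

lemma auxZ {s : ℝ} (hs : 1 < s) : Summable (fun k : ℤ => (1 + |(k : ℝ)|) ^ (-s)) := by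
  have h0 : Summable (fun k : ℤ => 1 / |(k : ℝ) + 0| ^ s) :=
    (Real.summable_one_div_int_add_rpow 0 s).mpr hs
  have hind : Summable (fun k : ℤ => if k = 0 then (1 : ℝ) else 0) := by
    apply summable_of_ne_finset_zero (s := {0})
    intro b hb
    simp only [Finset.mem_singleton] at hb
    simp [hb]
  refine Summable.of_nonneg_of_le (fun k => Real.rpow_nonneg (by positivity) _)
    (fun k => ?_) (hind.add h0)
  by_cases hk : k = 0
  · subst hk
    simp [Real.zero_rpow (by linarith : s ≠ 0)]
  · have hk1 : (1 : ℝ) ≤ |(k : ℝ)| := by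
      rw [← Int.cast_abs]
      exact_mod_cast Int.one_le_abs hk
    have h1 : (1 + |(k : ℝ)|) ^ (-s) ≤ 1 / |(k : ℝ)| ^ s := by
      rw [Real.rpow_neg (by positivity), ← one_div]
      apply one_div_le_one_div_of_le (by positivity)
      exact Real.rpow_le_rpow (by linarith) (by linarith) (by linarith)
    simp only [Pi.add_apply, if_neg hk, zero_add, add_zero]
    exact h1

lemma auxPi {s : ℝ} (hs : 1 < s) :
    ∀ d : ℕ, Summable (fun n : Fin d → ℤ => ∏ i, (1 + |(n i : ℝ)|) ^ (-s))
  | 0 => by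
    simp only [Finset.univ_eq_empty, Finset.prod_empty]
    exact .of_finite
  | (d + 1) => by
    have h := (auxZ hs).mul_of_nonneg (auxPi hs d)
      (fun k => Real.rpow_nonneg (by positivity) _)
      (fun n => Finset.prod_nonneg fun i _ => Real.rpow_nonneg (by positivity) _)
    have h2 := ((Fin.consEquiv (fun _ : Fin (d+1) => ℤ)).symm.summable_iff
      (f := fun x : ℤ × (Fin d → ℤ) =>
        (1 + |(x.1 : ℝ)|) ^ (-s) * ∏ i, (1 + |(x.2 i : ℝ)|) ^ (-s))).mpr h
    refine h2.congr fun n => ?_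
    simp [Fin.consEquiv, Fin.prod_univ_succ, Fin.tail]

set_option maxHeartbeats 1000000 in
open Real in
/-- The symbol `h_j(n) = n_j/|n| − n_j/((2π)⁻² + |n|²)^{1/2}` (with `h_j(0)=0`)
belongs to `ℓ_p(ℤ^d)` for every `p > d/2`. -/
theorem stmt_2 (d : ℕ) (hd : 2 ≤ d) (j : Fin d) (p : ℝ) (hp : (d : ℝ)/2 < p) :
    Summable (fun n : Fin d → ℤ =>
      |(if n = 0 then (0:ℝ) else
          (n j : ℝ) / Real.sqrt (∑ i, ((n i : ℝ))^2)
            - (n j : ℝ) / Real.sqrt ((2 * π)^(-2 : ℤ) + ∑ i, ((n i : ℝ))^2))| ^ p) := by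
  set c : ℝ := (2 * π) ^ (-2 : ℤ) with hc_def
  have hc : 0 < c := by
    have : (0:ℝ) < 2 * π := by positivity
    positivity
  have hd0 : (0:ℝ) < d := by exact_mod_cast lt_of_lt_of_le two_pos hd
  have hp0 : 0 < p := lt_of_le_of_lt (by positivity) hp
  set s : ℝ := 2 * p / d with hs_def
  have hs : 1 < s := by
    rw [hs_def, lt_div_iff₀ hd0]
    linarith
  have hsd : s * d = 2 * p := by
    rw [hs_def, div_mul_cancel₀ _ hd0.ne']
  refine Summable.of_nonneg_of_le (fun n => Real.rpow_nonneg (abs_nonneg _) _)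
    (fun n => ?_) (((auxPi hs d).mul_left (c ^ p * 2 ^ (2 * p))))
  by_cases hn : n = 0
  · subst hn
    rw [if_pos rfl, abs_zero, Real.zero_rpow hp0.ne']
    have h1 : (0:ℝ) ≤ ∏ i, (1 + |((0 : Fin d → ℤ) i : ℝ)|) ^ (-s) :=
      Finset.prod_nonneg fun i _ => Real.rpow_nonneg (by positivity) _
    have h2 : (0:ℝ) ≤ c ^ p * 2 ^ (2 * p) := by positivity
    exact mul_nonneg h2 h1
  · rw [if_neg hn]
    set Q : ℝ := ∑ i, ((n i : ℝ))^2 with hQ_def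
    obtain ⟨i₀, hi₀⟩ : ∃ i, n i ≠ 0 := by
      by_contra h
      push_neg at h
      exact hn (funext h)
    have hQ1 : 1 ≤ Q := by
      have h1 : (1:ℝ) ≤ ((n i₀ : ℝ))^2 := by
        have : (1:ℤ) ≤ |n i₀| := Int.one_le_abs hi₀
        have h2 : (1:ℝ) ≤ |(n i₀ : ℝ)| := by
          rw [← Int.cast_abs]; exact_mod_cast this
        nlinarith [sq_abs ((n i₀ : ℝ)), abs_nonneg ((n i₀ : ℝ))]
      calc (1:ℝ) ≤ ((n i₀ : ℝ))^2 := h1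
        _ ≤ Q := Finset.single_le_sum (f := fun i => ((n i : ℝ))^2)
            (fun i _ => sq_nonneg _) (Finset.mem_univ i₀)
    have hQ0 : 0 < Q := by linarith
    set r : ℝ := Real.sqrt Q with hr_def
    set R : ℝ := Real.sqrt (c + Q) with hR_def
    have hr1 : 1 ≤ r := by
      rw [hr_def, show (1:ℝ) = Real.sqrt 1 by simp]
      exact Real.sqrt_le_sqrt hQ1
    have hr0 : 0 < r := by linarith
    have hrsq : r ^ 2 = Q := Real.sq_sqrt hQ0.le
    have hRsq : R ^ 2 = c + Q := Real.sq_sqrt (by linarith)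
    have hrR : r ≤ R := Real.sqrt_le_sqrt (by linarith)
    have hR0 : 0 < R := lt_of_lt_of_le hr0 hrR
    have hnj : |(n j : ℝ)| ≤ r := by
      have h1 : ((n j : ℝ))^2 ≤ Q :=
        Finset.single_le_sum (f := fun i => ((n i : ℝ))^2)
          (fun i _ => sq_nonneg _) (Finset.mem_univ j)
      rw [← Real.sqrt_sq_eq_abs]
      exact Real.sqrt_le_sqrt h1
    -- key bound |h(n)| ≤ c / Q
    have key1 : |(n j : ℝ) / r - (n j : ℝ) / R| ≤ c / Q := by
      have heq : (n j : ℝ) / r - (n j : ℝ) / R = (n j : ℝ) * ((R - r) / (r * R)) := by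
        field_simp
      have hfrac : (0:ℝ) ≤ (R - r) / (r * R) :=
        div_nonneg (by linarith) (by positivity)
      rw [heq, abs_mul, abs_of_nonneg hfrac]
      have hdiff : (R - r) * (R + r) = c := by nlinarith
      have hstep : |(n j : ℝ)| * ((R - r) / (r * R)) ≤ r * ((R - r) / (r * R)) :=
        mul_le_mul_of_nonneg_right hnj hfrac
      have hstep2 : r * ((R - r) / (r * R)) = (R - r) / R := by
        field_simp
      have hstep3 : (R - r) / R ≤ c / Q := by
        rw [div_le_div_iff₀ hR0 hQ0]
        have : (R - r) * Q = (R - r) * (r * r) := by rw [← hrsq]; ring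
        nlinarith [mul_nonneg (sub_nonneg.mpr hrR) hr0.le]
      calc |(n j : ℝ)| * ((R - r) / (r * R)) ≤ r * ((R - r) / (r * R)) := hstep
        _ = (R - r) / R := hstep2
        _ ≤ c / Q := hstep3
    have key2 : |(n j : ℝ) / r - (n j : ℝ) / R| ^ p ≤ (c / Q) ^ p :=
      Real.rpow_le_rpow (abs_nonneg _) key1 hp0.le
    -- (c/Q)^p ≤ c^p * 2^(2p) * ∏ (1 + |n i|)^(-s)
    have hprod : (2 * r) ^ (-(2 * p)) ≤ ∏ i, (1 + |(n i : ℝ)|) ^ (-s) := by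
      have hbound : ∀ i : Fin d, (2 * r) ^ (-s) ≤ (1 + |(n i : ℝ)|) ^ (-s) := by
        intro i
        apply Real.rpow_le_rpow_of_nonpos (by positivity)
        · have h1 : |(n i : ℝ)| ≤ r := by
            have h2 : ((n i : ℝ))^2 ≤ Q :=
              Finset.single_le_sum (f := fun k => ((n k : ℝ))^2)
                (fun k _ => sq_nonneg _) (Finset.mem_univ i)
            rw [← Real.sqrt_sq_eq_abs]
            exact Real.sqrt_le_sqrt h2
          linarith
        · linarith
      calc (2 * r) ^ (-(2 * p)) = (2 * r) ^ ((-s) * d) := by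
            rw [← hsd]; ring_nf
        _ = ((2 * r) ^ (-s)) ^ (d : ℕ) := by
            rw [Real.rpow_mul (by positivity), Real.rpow_natCast]
        _ = ∏ _i : Fin d, (2 * r) ^ (-s) := by
            rw [Finset.prod_const, Finset.card_univ, Fintype.card_fin]
        _ ≤ ∏ i, (1 + |(n i : ℝ)|) ^ (-s) :=
            Finset.prod_le_prod (fun i _ => by positivity) (fun i _ => hbound i)
    have key3 : (c / Q) ^ p ≤ c ^ p * 2 ^ (2 * p) * ∏ i, (1 + |(n i : ℝ)|) ^ (-s) := by
      have h1 : (c / Q) ^ p = c ^ p / Q ^ p := Real.div_rpow hc.le hQ0.le p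
      have h2 : Q ^ p = r ^ (2 * p) := by
        rw [← hrsq, ← Real.rpow_natCast r 2, ← Real.rpow_mul hr0.le]
        norm_num
      have h3 : c ^ p / Q ^ p = c ^ p * r ^ (-(2 * p)) := by
        rw [h2, Real.rpow_neg hr0.le, div_eq_mul_inv]
      have h4 : r ^ (-(2 * p)) = 2 ^ (2 * p) * (2 * r) ^ (-(2 * p)) := by
        rw [Real.mul_rpow (by norm_num) hr0.le, ← mul_assoc,
          ← Real.rpow_add (by norm_num : (0:ℝ) < 2)]
        simp
      rw [h1, h3, h4, ← mul_assoc]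
      exact mul_le_mul_of_nonneg_left hprod (by positivity)
    calc |(n j : ℝ) / Real.sqrt Q - (n j : ℝ) / Real.sqrt (c + Q)| ^ p
        ≤ (c / Q) ^ p := key2
      _ ≤ c ^ p * 2 ^ (2 * p) * ∏ i, (1 + |(n i : ℝ)|) ^ (-s) := key3
end

section
/- Let H be a separable Hilbert space and T a compact operator on H with singular value sequence μ(k,T) = inf{‖T − R‖ : rank R ≤ k}. If T ∈ L_{p,∞} and S ∈ L_{q,∞} (i.e. μ(k,T) ≤ C₁(k+1)^{−1/p} and μ(k,S) ≤ C₂(k+1)^{−1/q}), then TS ∈ L_{r,∞} where 1/r = 1/p + 1/q, with ‖TS‖_{r,∞} ≤ c_{p,q} ‖T‖_{p,∞} ‖S‖_{q,∞} for a constant c_{p,q} depending only on p and q. -/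
/-- The `k`-th singular value (approximation number) of a bounded operator:
`μ(k,T) = inf{‖T − R‖ : rank R ≤ k}`. -/
noncomputable def singValue {H : Type*} [NormedAddCommGroup H] [InnerProductSpace ℂ H]
    (k : ℕ) (T : H →L[ℂ] H) : ℝ :=
  sInf {c : ℝ | ∃ R : H →L[ℂ] H,
    Module.rank ℂ (LinearMap.range (R : H →ₗ[ℂ] H)) ≤ (k : Cardinal) ∧ ‖T - R‖ = c}

/-! If `‖T - R₁‖` and `‖S - R₂‖` are nearly optimal with `rank R₁ ≤ m`, `rank R₂ ≤ n`, then
`R = R₁ S + (T - R₁) R₂` has rank at most `m + n` and `TS - R = (T - R₁)(S - R₂)`, so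
`μ(m + n, TS) ≤ μ(m, T) μ(n, S)`. Taking `m = n = ⌊k/2⌋` and using `k + 1 ≤ 2(⌊k/2⌋ + 1)`,
the weak-type bounds multiply to a weak-type bound with exponent `1/r = 1/p + 1/q`
and constant `2^{1/r}`. -/

open Filter Topology

namespace singValue

variable {H : Type*} [NormedAddCommGroup H] [InnerProductSpace ℂ H]

lemma nonneg (k : ℕ) (T : H →L[ℂ] H) : 0 ≤ singValue k T := by
  apply Real.sInf_nonneg
  rintro c ⟨R, -, rfl⟩
  exact norm_nonneg _

lemma le_norm_sub {k : ℕ} (T : H →L[ℂ] H) {R : H →L[ℂ] H}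
    (hR : LinearMap.rank (R : H →ₗ[ℂ] H) ≤ k) : singValue k T ≤ ‖T - R‖ := by
  refine csInf_le ⟨0, ?_⟩ ⟨R, hR, rfl⟩
  rintro _ ⟨R, -, rfl⟩
  exact norm_nonneg _

lemma exists_norm_sub_lt (k : ℕ) (T : H →L[ℂ] H) {ε : ℝ} (hε : 0 < ε) :
    ∃ R : H →L[ℂ] H, LinearMap.rank (R : H →ₗ[ℂ] H) ≤ k ∧ ‖T - R‖ < singValue k T + ε := by
  obtain ⟨_, ⟨R, hR, rfl⟩, hlt⟩ : ∃ c ∈ _, c < singValue k T + ε := by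
    refine Real.lt_sInf_add_pos ?_ hε
    exact ⟨‖T‖, 0, by simp, by simp⟩
  exact ⟨R, hR, hlt⟩

lemma antitone (T : H →L[ℂ] H) : Antitone fun k : ℕ ↦ singValue k T := by
  intro k l hkl
  refine le_csInf ⟨‖T‖, 0, by simp, by simp⟩ ?_
  rintro _ ⟨R, hR, rfl⟩
  exact le_norm_sub T (hR.trans (by exact_mod_cast hkl))

lemma comp_le_mul_norm_sub (T S : H →L[ℂ] H) {m n : ℕ} {R₁ R₂ : H →L[ℂ] H}
    (hR₁ : LinearMap.rank (R₁ : H →ₗ[ℂ] H) ≤ m) (hR₂ : LinearMap.rank (R₂ : H →ₗ[ℂ] H) ≤ n) :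
    singValue (m + n) (T.comp S) ≤ ‖T - R₁‖ * ‖S - R₂‖ := by
  set R : H →L[ℂ] H := R₁.comp S + (T - R₁).comp R₂
  have hsub : T.comp S - R = (T - R₁).comp (S - R₂) := by
    simp only [R, ContinuousLinearMap.comp_sub, ContinuousLinearMap.sub_comp]
    abel
  have hrank : LinearMap.rank (R : H →ₗ[ℂ] H) ≤ (m + n : ℕ) :=
    calc LinearMap.rank (R : H →ₗ[ℂ] H)
        ≤ LinearMap.rank ((R₁ : H →ₗ[ℂ] H).comp (S : H →ₗ[ℂ] H)) +
            LinearMap.rank (((T - R₁ : H →L[ℂ] H) : H →ₗ[ℂ] H).comp (R₂ : H →ₗ[ℂ] H)) :=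
          LinearMap.rank_add_le _ _
      _ ≤ LinearMap.rank (R₁ : H →ₗ[ℂ] H) + LinearMap.rank (R₂ : H →ₗ[ℂ] H) :=
          add_le_add (LinearMap.rank_comp_le_left _ _) (LinearMap.rank_comp_le_right _ _)
      _ ≤ (m + n : ℕ) := by push_cast; exact add_le_add hR₁ hR₂
  calc singValue (m + n) (T.comp S) ≤ ‖T.comp S - R‖ := le_norm_sub _ hrank
    _ = ‖(T - R₁).comp (S - R₂)‖ := by rw [hsub]
    _ ≤ ‖T - R₁‖ * ‖S - R₂‖ := ContinuousLinearMap.opNorm_comp_le _ _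

lemma comp_add_le_mul (T S : H →L[ℂ] H) (m n : ℕ) :
    singValue (m + n) (T.comp S) ≤ singValue m T * singValue n S := by
  set a := singValue m T
  set b := singValue n S
  have hclose : ∀ ε > 0, singValue (m + n) (T.comp S) ≤ (a + ε) * (b + ε) := by
    intro ε hε
    obtain ⟨R₁, hR₁, hT⟩ := exists_norm_sub_lt m T hε
    obtain ⟨R₂, hR₂, hS⟩ := exists_norm_sub_lt n S hε
    calc singValue (m + n) (T.comp S) ≤ ‖T - R₁‖ * ‖S - R₂‖ := comp_le_mul_norm_sub T S hR₁ hR₂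
      _ ≤ (a + ε) * (b + ε) := by
          gcongr
          exact add_nonneg (nonneg m T) hε.le
  have hlim : Tendsto (fun ε : ℝ ↦ (a + ε) * (b + ε)) (𝓝[>] 0) (𝓝 (a * b)) := by
    have := ((continuous_const.add continuous_id).mul (continuous_const.add continuous_id)).tendsto
      (0 : ℝ) (f := fun ε : ℝ ↦ (a + ε) * (b + ε))
    simpa using this.mono_left nhdsWithin_le_nhds
  exact ge_of_tendsto hlim (eventually_nhdsWithin_of_forall hclose)

end singValue

lemma Real.rpow_neg_le_two_rpow_mul {x y s : ℝ} (hy : 0 < y) (hyx : y ≤ 2 * x) (hs : 0 ≤ s) :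
    x ^ (-s) ≤ 2 ^ s * y ^ (-s) := by
  have hx : 0 < x := by linarith
  calc x ^ (-s) = 2 ^ s * (2 * x) ^ (-s) := by
        rw [Real.mul_rpow zero_le_two hx.le, Real.rpow_neg zero_le_two, mul_inv_cancel_left₀]
        positivity
    _ ≤ 2 ^ s * y ^ (-s) := mul_le_mul_of_nonneg_left
        (Real.rpow_le_rpow_of_nonpos hy hyx (neg_nonpos.mpr hs)) (by positivity)

/-- Weak-Schatten Hölder inequality: if `μ(k,T) ≤ C₁(k+1)^{-1/p}` and
`μ(k,S) ≤ C₂(k+1)^{-1/q}`, then `μ(k,TS) ≤ c_{p,q} C₁ C₂ (k+1)^{-1/r}` with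
`1/r = 1/p + 1/q`, where `c_{p,q}` depends only on `p` and `q`. -/
theorem stmt_10 (p q r : ℝ) (hp : 0 < p) (hq : 0 < q) (hr : 1/r = 1/p + 1/q) :
    ∃ c : ℝ, 0 < c ∧
      ∀ (H : Type) [NormedAddCommGroup H] [InnerProductSpace ℂ H] [CompleteSpace H]
        [TopologicalSpace.SeparableSpace H] (T S : H →L[ℂ] H),
        IsCompactOperator T → IsCompactOperator S →
        ∀ C₁ C₂ : ℝ, 0 ≤ C₁ → 0 ≤ C₂ →
        (∀ k : ℕ, singValue k T ≤ C₁ * ((k : ℝ) + 1) ^ (-(1/p))) →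
        (∀ k : ℕ, singValue k S ≤ C₂ * ((k : ℝ) + 1) ^ (-(1/q))) →
        ∀ k : ℕ, singValue k (T.comp S) ≤ c * C₁ * C₂ * ((k : ℝ) + 1) ^ (-(1/r)) := by
  refine ⟨2 ^ (1/r), by positivity, ?_⟩
  intro H _ _ _ _ T S _ _ C₁ C₂ hC₁ hC₂ hT hS k
  have hs : 0 ≤ 1/r := by rw [hr]; positivity
  set m := k / 2
  have hkm : (k : ℝ) + 1 ≤ 2 * ((m : ℝ) + 1) := by
    have : k + 1 ≤ 2 * (m + 1) := by omega
    exact_mod_cast this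
  calc singValue k (T.comp S)
      ≤ singValue (m + m) (T.comp S) := singValue.antitone _ (by omega)
    _ ≤ singValue m T * singValue m S := singValue.comp_add_le_mul T S m m
    _ ≤ (C₁ * ((m : ℝ) + 1) ^ (-(1/p))) * (C₂ * ((m : ℝ) + 1) ^ (-(1/q))) :=
        mul_le_mul (hT m) (hS m) (singValue.nonneg m S) (by positivity)
    _ = C₁ * C₂ * ((m : ℝ) + 1) ^ (-(1/r)) := by
        rw [hr, neg_add, Real.rpow_add (by positivity)]; ring
    _ ≤ C₁ * C₂ * (2 ^ (1/r) * ((k : ℝ) + 1) ^ (-(1/r))) := by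
        gcongr
        exact Real.rpow_neg_le_two_rpow_mul (by positivity) hkm hs
    _ = 2 ^ (1/r) * C₁ * C₂ * ((k : ℝ) + 1) ^ (-(1/r)) := by ring
end

section
/- Let d ≥ 2 and let s ∈ S^{d−1} with |s − e_l| ≤ ε where ε > 0 satisfies 1 − √d·ε ≥ 3·max(2,√d)·ε. Let c_1,…,c_d ≥ 0 with c_l = min_j c_j. Then Σ_{j=1}^d ((1 − s_j²) − Σ_{k≠j}|s_k s_j|) c_j ≥ (1/3)(1 − √d ε) Σ_{j=1}^d c_j. -/
/-!
Write `a_j = (1 - s_j²) - Σ_{k≠j} |s_k s_j| = 1 - |s_j| Σ_k |s_k|` and `δ = √d ε`. By Cauchy–Schwarz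
`Σ_k |s_k| ≤ √d`, and every coordinate `s_j` with `j ≠ l` is at most `ε` in absolute value, so
`a_j ≥ 1 - δ` off `l`, while `a_l ≥ -δ` because `Σ_{k≠l} |s_k| ≤ √d ‖s - e_l‖ ≤ δ`. The single
possibly negative weight sits at the smallest `c_l`, which is dominated by the other `c_j` since
`d ≥ 2`; the smallness condition gives `4δ ≤ 1`, which absorbs it.
-/

open Finset

section RowMargin

variable {ι : Type*} [Fintype ι]

theorem sum_abs_le_sqrt_card_mul_norm (x : EuclideanSpace ℝ ι) :
    ∑ i, |x i| ≤ √(Fintype.card ι) * ‖x‖ := by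
  rw [EuclideanSpace.norm_eq, ← Real.sqrt_mul (Nat.cast_nonneg _)]
  refine (le_abs_self _).trans (Real.abs_le_sqrt ?_)
  simpa [sq_abs] using sq_sum_le_card_mul_sum_sq (s := univ) (f := fun i => |x i|)

variable [DecidableEq ι]

/-- The Gershgorin margin of row `j` of the matrix `1 - x xᵀ`. -/
def rowMargin (x : ι → ℝ) (j : ι) : ℝ :=
  (1 - x j ^ 2) - ∑ k ∈ univ.erase j, |x k * x j|

theorem rowMargin_eq (x : ι → ℝ) (j : ι) :
    rowMargin x j = 1 - |x j| * ∑ k, |x k| := by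
  rw [rowMargin, ← add_sum_erase _ _ (mem_univ j), mul_add, mul_sum, ← sq_abs, sq]
  simp only [abs_mul, mul_comm]
  ring

theorem sum_erase_abs_le_sqrt_card_mul_norm_sub_single (x : EuclideanSpace ℝ ι) (l : ι) (a : ℝ) :
    ∑ k ∈ univ.erase l, |x k| ≤ √(Fintype.card ι) * ‖x - EuclideanSpace.single l a‖ := by
  refine le_trans ?_ (sum_abs_le_sqrt_card_mul_norm _)
  calc ∑ k ∈ univ.erase l, |x k|
      = ∑ k ∈ univ.erase l, |(x - EuclideanSpace.single l a) k| :=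
        sum_congr rfl fun k hk => by simp [ne_of_mem_erase hk]
    _ ≤ ∑ k, |(x - EuclideanSpace.single l a) k| :=
        sum_le_sum_of_subset_of_nonneg (erase_subset l univ) fun _ _ _ => abs_nonneg _

variable {x : EuclideanSpace ℝ ι} {l : ι} {ε : ℝ}

theorem one_sub_le_rowMargin_of_ne (hx : ‖x‖ = 1) (hxl : ‖x - EuclideanSpace.single l 1‖ ≤ ε)
    (j : ι) (hj : j ≠ l) : 1 - √(Fintype.card ι) * ε ≤ rowMargin x j := by
  have hxj : |x j| ≤ ε := by
    simpa [hj] using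
      (PiLp.norm_apply_le (x - EuclideanSpace.single l 1) j).trans hxl
  have hsum : ∑ k, |x k| ≤ √(Fintype.card ι) := by
    simpa [hx] using sum_abs_le_sqrt_card_mul_norm x
  rw [rowMargin_eq]
  nlinarith [abs_nonneg (x j), Real.sqrt_nonneg (Fintype.card ι)]

theorem neg_le_rowMargin (hx : ‖x‖ = 1) (hxl : ‖x - EuclideanSpace.single l 1‖ ≤ ε) :
    -(√(Fintype.card ι) * ε) ≤ rowMargin x l := by
  have hxl1 : |x l| ≤ 1 := by simpa [hx] using PiLp.norm_apply_le x l
  have hsum : ∑ k ∈ univ.erase l, |x k| ≤ √(Fintype.card ι) * ε :=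
    (sum_erase_abs_le_sqrt_card_mul_norm_sub_single x l 1).trans
      (mul_le_mul_of_nonneg_left hxl (Real.sqrt_nonneg _))
  rw [rowMargin_eq, ← add_sum_erase _ _ (mem_univ l)]
  nlinarith [abs_nonneg (x l), sq_abs (x l),
    sum_nonneg fun k (_ : k ∈ univ.erase l) => abs_nonneg (x k)]

end RowMargin

theorem one_third_mul_sum_le_sum_mul {ι : Type*} [Fintype ι] [Nontrivial ι]
    (a c : ι → ℝ) (l : ι) (δ : ℝ) (hδ : 4 * δ ≤ 1) (hc : 0 ≤ c l) (hcl : ∀ j, c l ≤ c j)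
    (hal : -δ ≤ a l) (ha : ∀ j ≠ l, 1 - δ ≤ a j) :
    1 / 3 * (1 - δ) * ∑ j, c j ≤ ∑ j, a j * c j := by
  classical
  obtain ⟨j₀, hj₀⟩ := exists_ne l
  have hrest : c l ≤ ∑ j ∈ univ.erase l, c j :=
    (hcl j₀).trans <| single_le_sum (fun j _ => hc.trans (hcl j)) (mem_erase.2 ⟨hj₀, mem_univ j₀⟩)
  have hrest_margin : (1 - δ) * ∑ j ∈ univ.erase l, c j ≤ ∑ j ∈ univ.erase l, a j * c j := by
    rw [mul_sum]
    exact sum_le_sum fun j hj =>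
      mul_le_mul_of_nonneg_right (ha j (ne_of_mem_erase hj)) (hc.trans (hcl j))
  rw [← add_sum_erase _ _ (mem_univ l), ← add_sum_erase _ _ (mem_univ l)]
  nlinarith [mul_le_mul_of_nonneg_right hal hc, mul_nonneg hc (by linarith : 0 ≤ 1 - 4 * δ)]

open Finset in
theorem stmt_17_general (d : ℕ) (hd : 2 ≤ d) (s : EuclideanSpace ℝ (Fin d)) (hs : ‖s‖ = 1)
    (l : Fin d) (ε : ℝ)
    (hsl : ‖s - EuclideanSpace.single l (1:ℝ)‖ ≤ ε)
    (hεsmall : 1 - Real.sqrt d * ε ≥ 3 * max 2 (Real.sqrt d) * ε)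
    (c : Fin d → ℝ) (hc : ∀ j, 0 ≤ c j) (hcl : ∀ j, c l ≤ c j) :
    ∑ j, ((1 - (s j)^2) - ∑ k ∈ Finset.univ.erase j, |s k * s j|) * c j
      ≥ (1/3) * (1 - Real.sqrt d * ε) * ∑ j, c j := by
  have : Nontrivial (Fin d) := Fin.nontrivial_iff_two_le.2 hd
  have hε : 0 ≤ ε := (norm_nonneg _).trans hsl
  have hδ : 4 * (√d * ε) ≤ 1 := by
    nlinarith [mul_le_mul_of_nonneg_right (le_max_right 2 √d) hε]
  have hmargin_l : -(√d * ε) ≤ rowMargin s l := by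
    simpa using neg_le_rowMargin hs hsl
  have hmargin : ∀ j ≠ l, 1 - √d * ε ≤ rowMargin s j := fun j hj => by
    simpa using one_sub_le_rowMargin_of_ne hs hsl j hj
  exact one_third_mul_sum_le_sum_mul (rowMargin s) c l _ hδ (hc l) hcl hmargin_l hmargin

open Finset in
/-- For `s ∈ S^{d−1}` close to `e_l`, `ε` small, and nonnegative `c_j` with minimum at `l`:
`Σ_j ((1 − s_j²) − Σ_{k≠j}|s_k s_j|) c_j ≥ (1/3)(1 − √d ε) Σ_j c_j`. -/
theorem stmt_17 (d : ℕ) (hd : 2 ≤ d) (s : EuclideanSpace ℝ (Fin d)) (hs : ‖s‖ = 1)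
    (l : Fin d) (ε : ℝ) (hε : 0 < ε)
    (hsl : ‖s - EuclideanSpace.single l (1:ℝ)‖ ≤ ε)
    (hεsmall : 1 - Real.sqrt d * ε ≥ 3 * max 2 (Real.sqrt d) * ε)
    (c : Fin d → ℝ) (hc : ∀ j, 0 ≤ c j) (hcl : ∀ j, c l ≤ c j) :
    ∑ j, ((1 - (s j)^2) - ∑ k ∈ Finset.univ.erase j, |s k * s j|) * c j
      ≥ (1/3) * (1 - Real.sqrt d * ε) * ∑ j, c j :=
  stmt_17_general d hd s hs l ε hsl hεsmall c hc hcl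
end

section
/- For t ∈ ℝ the function g(t) = t(1+t²)^{−1/2} satisfies: for all real λ ≠ μ, (g(λ) − g(μ))/(λ − μ) = ψ₁(λ,μ)·ψ₂(λ,μ)·ψ₃(λ,μ), where ψ₁ = 1 + (1 − λμ)/((1+λ²)^{1/2}(1+μ²)^{1/2}), ψ₂ = (1+λ²)^{1/4}(1+μ²)^{1/4}/((1+λ²)^{1/2} + (1+μ²)^{1/2}), and ψ₃ = (1+λ²)^{−1/4}(1+μ²)^{−1/4}. -/
/-- Factorization of the divided difference of `g(t) = t(1+t²)^{−1/2}`: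
`(g(λ) − g(μ))/(λ − μ) = ψ₁ ψ₂ ψ₃`. -/
theorem stmt_18 (lam mu : ℝ) (h : lam ≠ mu) :
    (lam * (1 + lam^2) ^ (-(1:ℝ)/2) - mu * (1 + mu^2) ^ (-(1:ℝ)/2)) / (lam - mu)
      = (1 + (1 - lam * mu) / ((1 + lam^2) ^ ((1:ℝ)/2) * (1 + mu^2) ^ ((1:ℝ)/2)))
        * ((1 + lam^2) ^ ((1:ℝ)/4) * (1 + mu^2) ^ ((1:ℝ)/4)
            / ((1 + lam^2) ^ ((1:ℝ)/2) + (1 + mu^2) ^ ((1:ℝ)/2)))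
        * ((1 + lam^2) ^ (-(1:ℝ)/4) * (1 + mu^2) ^ (-(1:ℝ)/4)) := by
  have hl : (0:ℝ) < 1 + lam^2 := by positivity
  have hm : (0:ℝ) < 1 + mu^2 := by positivity
  set a := (1 + lam^2) ^ ((1:ℝ)/4) with ha_def
  set b := (1 + mu^2) ^ ((1:ℝ)/4) with hb_def
  have hapos : 0 < a := Real.rpow_pos_of_pos hl _
  have hbpos : 0 < b := Real.rpow_pos_of_pos hm _
  have ha2 : (1 + lam^2) ^ ((1:ℝ)/2) = a^2 := by
    rw [ha_def, ← Real.rpow_natCast ((1 + lam^2) ^ ((1:ℝ)/4)) 2,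
      ← Real.rpow_mul hl.le]
    norm_num
  have hb2 : (1 + mu^2) ^ ((1:ℝ)/2) = b^2 := by
    rw [hb_def, ← Real.rpow_natCast ((1 + mu^2) ^ ((1:ℝ)/4)) 2,
      ← Real.rpow_mul hm.le]
    norm_num
  have ha4 : a^4 = 1 + lam^2 := by
    rw [ha_def, ← Real.rpow_natCast ((1 + lam^2) ^ ((1:ℝ)/4)) 4,
      ← Real.rpow_mul hl.le]
    norm_num
  have hb4 : b^4 = 1 + mu^2 := by
    rw [hb_def, ← Real.rpow_natCast ((1 + mu^2) ^ ((1:ℝ)/4)) 4,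
      ← Real.rpow_mul hm.le]
    norm_num
  have han : (1 + lam^2) ^ (-(1:ℝ)/4) = a⁻¹ := by
    rw [ha_def, ← Real.rpow_neg hl.le]; norm_num
  have hbn : (1 + mu^2) ^ (-(1:ℝ)/4) = b⁻¹ := by
    rw [hb_def, ← Real.rpow_neg hm.le]; norm_num
  have han2 : (1 + lam^2) ^ (-(1:ℝ)/2) = (a^2)⁻¹ := by
    rw [← ha2, ← Real.rpow_neg hl.le]; norm_num
  have hbn2 : (1 + mu^2) ^ (-(1:ℝ)/2) = (b^2)⁻¹ := by
    rw [← hb2, ← Real.rpow_neg hm.le]; norm_num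
  rw [ha2, hb2, han, hbn, han2, hbn2]
  have hab : a^2 + b^2 ≠ 0 := by positivity
  have hlm : lam - mu ≠ 0 := sub_ne_zero.mpr h
  field_simp
  linear_combination lam*hb4 - mu*ha4
end
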